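/- arXiv:1510.03629 — 3 statements merged into one kernel-verified Lean document; each statement's English description precedes it below -/
import Mathlib

section
/- For any Lévy process X with independent increments and any ε > 0, x > 0: P(−I_1 > (1−ε)x) ≥ P(−X_1 > −εx) · P(M_1^- > x), where I_1 = inf_{0≤u≤1} X_u and M_1^- = sup_{0≤u≤v≤1}(X_u − X_v), assuming additionally that X is α-stable (hence P(−X_{1−t} > −εx) ≥ P(−X_1 > −εx) for t ∈ (0,1) by self-similarity). -/
/-!
Discretize time on the grid `k / N`. Decompose the event that the drawdown exceeds `x` on the grid
according to the first grid time `j` at which it does. That event depends only on the increments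
before `j`, so it is independent of `X₁ - X_{j/N}`, which has the law of `X_{1 - j/N}`; by
self-similarity `P(X_{1 - j/N} < εx) ≥ P(X₁ < εx)`. On the intersection, some `X_{i/N} - X₁`
exceeds `(1 - ε)x`. Reversing the order of the i.i.d. increments turns `X_{i/N} - X₁` into
`-X_{(N-i)/N}` without changing the joint law, which gives the inequality on the grid. Along dyadic
grids these events increase, and right-continuity of the paths shows that their union contains the
event `M₁⁻ > x`.
-/

open MeasureTheory ProbabilityTheory Set Filter

/-- A (real-valued) Lévy process: measurable, starts at zero, càdlàg paths,
stationary increments, independent increments. -/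
structure IsLevyProcess {Ω : Type*} [MeasurableSpace Ω] (P : Measure Ω)
    (X : ℝ → Ω → ℝ) : Prop where
  meas : ∀ t : ℝ, Measurable (X t)
  zero : ∀ ω, X 0 ω = 0
  rightCont : ∀ ω, ∀ t : ℝ, ContinuousWithinAt (fun s => X s ω) (Set.Ici t) t
  leftLimits : ∀ ω, ∀ t : ℝ, 0 < t →
    ∃ l : ℝ, Filter.Tendsto (fun s => X s ω) (nhdsWithin t (Set.Iio t)) (nhds l)
  stationary : ∀ s t : ℝ, 0 ≤ s → 0 ≤ t →
    P.map (fun ω => X (s + t) ω - X s ω) = P.map (X t)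
  indep : ∀ n : ℕ, ∀ τ : Fin (n + 1) → ℝ, Monotone τ →
    iIndepFun
      (fun i : Fin n => fun ω => X (τ i.succ) ω - X (τ i.castSucc) ω) P

/-- Self-similarity with index `α`: `(X_{bt})_t` has the same law as `(b^{1/α} X_t)_t`. -/
def SelfSimilar {Ω : Type*} [MeasurableSpace Ω] (P : Measure Ω)
    (X : ℝ → Ω → ℝ) (α : ℝ) : Prop :=
  ∀ b : ℝ, 0 < b →
    P.map (fun ω => fun t : ℝ => X (b * t) ω)
      = P.map (fun ω => fun t : ℝ => b ^ (1 / α) * X t ω)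

open scoped ENNReal Topology

lemma ProbabilityTheory.iIndepFun.map_precomp_eq_map {Ω ι β : Type*} [MeasurableSpace Ω] [Fintype ι]
    [MeasurableSpace β] {μ : Measure Ω} {ξ : ι → Ω → β} (hind : iIndepFun ξ μ)
    (hlaw : ∀ i j, IdentDistrib (ξ i) (ξ j) μ μ) {g : ι → ι} (hg : g.Injective) :
    μ.map (fun ω i => ξ (g i) ω) = μ.map (fun ω i => ξ i ω) := by
  rw [(hind.precomp hg).map_fun_eq_pi_map fun i => (hlaw (g i) (g i)).aemeasurable_fst,
    hind.map_fun_eq_pi_map fun i => (hlaw i i).aemeasurable_fst]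
  exact congrArg Measure.pi (funext fun i => (hlaw _ _).map_eq)

lemma tendsto_ceil_mul_two_pow_div_two_pow {u : ℝ} (hu : 0 ≤ u) :
    Tendsto (fun n : ℕ => (⌈u * 2 ^ n⌉₊ : ℝ) / 2 ^ n) atTop (𝓝[≥] u) := by
  refine tendsto_nhdsWithin_iff.2 ⟨?_, Eventually.of_forall fun n => ?_⟩
  · have hlim : Tendsto (fun n : ℕ => u + (1 / 2) ^ n) atTop (𝓝 u) := by
      simpa using tendsto_const_nhds.add
        (tendsto_pow_atTop_nhds_zero_of_lt_one (r := (1 / 2 : ℝ)) (by norm_num) (by norm_num))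
    refine tendsto_of_tendsto_of_tendsto_of_le_of_le tendsto_const_nhds hlim (fun n => ?_)
      fun n => ?_
    · rw [le_div_iff₀ (by positivity)]
      exact Nat.le_ceil _
    · rw [div_le_iff₀ (by positivity), add_mul, one_div_pow, one_div_mul_cancel (by positivity)]
      exact (Nat.ceil_lt_add_one (by positivity)).le
  · rw [mem_Ici, le_div_iff₀ (by positivity)]
    exact Nat.le_ceil _

namespace RandomWalk

variable {N : ℕ}

def partialSum (v : Fin N → ℝ) (k : ℕ) : ℝ := ∑ i with i.val < k, v i

lemma partialSum_of_le {v : Fin N → ℝ} {k : ℕ} (hk : N ≤ k) : partialSum v k = ∑ i, v i := by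
  unfold partialSum
  rw [Finset.filter_true_of_mem fun i _ => lt_of_lt_of_le i.isLt hk]

lemma partialSum_eq_sum_range (g : ℕ → ℝ) {k : ℕ} (hk : k ≤ N) :
    partialSum (fun i : Fin N => g i) k = ∑ i ∈ Finset.range k, g i := by
  rw [partialSum, Finset.sum_filter, Fin.sum_univ_eq_sum_range (fun i => if i < k then g i else 0),
    ← Finset.sum_filter]
  congr 1
  ext i
  simp only [Finset.mem_filter, Finset.mem_range]
  omega

lemma partialSum_rev (v : Fin N → ℝ) {k : ℕ} (hk : k ≤ N) :
    partialSum (fun i => v i.rev) k = partialSum v N - partialSum v (N - k) := by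
  rw [partialSum_of_le le_rfl, partialSum, partialSum, Finset.sum_filter, Finset.sum_filter,
    ← Fintype.sum_equiv Fin.revPerm (fun i => if (i.rev : ℕ) < k then v i else 0),
    ← Finset.sum_sub_distrib]
  · refine Finset.sum_congr rfl fun i _ => ?_
    have := i.isLt
    simp only [Fin.val_rev]
    split_ifs <;> first | omega | ring
  · intro i
    simp [Fin.rev_rev]

lemma measurable_partialSum (k : ℕ) : Measurable fun v : Fin N → ℝ => partialSum v k :=
  Finset.measurable_sum _ fun i _ => measurable_pi_apply i

lemma partialSum_sub_partialSum (v : Fin N → ℝ) (j : ℕ) :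
    partialSum v N - partialSum v j = ∑ i with j ≤ i.val, v i := by
  rw [partialSum_of_le le_rfl, partialSum, sub_eq_iff_eq_add',
    ← Finset.sum_filter_add_sum_filter_not Finset.univ (fun i : Fin N => i.val < j)]
  simp only [not_lt]

variable {Ω : Type*} {ξ : Fin N → Ω → ℝ}

abbrev sigmaOfIncrements (ξ : Fin N → Ω → ℝ) (s : Set (Fin N)) : MeasurableSpace Ω :=
  ⨆ i ∈ s, MeasurableSpace.comap (ξ i) inferInstance

lemma measurable_sigmaOfIncrements {s : Set (Fin N)} {i : Fin N} (hi : i ∈ s) :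
    Measurable[sigmaOfIncrements ξ s] (ξ i) :=
  Measurable.of_comap_le (le_iSup₂ (f := fun i (_ : i ∈ s) => MeasurableSpace.comap (ξ i) _) i hi)

lemma measurable_partialSum_of_le {j k : ℕ} (hk : k ≤ j) :
    Measurable[sigmaOfIncrements ξ {i | i.val < j}] fun ω => partialSum (ξ · ω) k :=
  Finset.measurable_sum _ fun _ hi =>
    measurable_sigmaOfIncrements (lt_of_lt_of_le (Finset.mem_filter.1 hi).2 hk)

lemma measurable_partialSum_sub_of_ge (j : ℕ) :
    Measurable[sigmaOfIncrements ξ {i | j ≤ i.val}]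
      fun ω => partialSum (ξ · ω) N - partialSum (ξ · ω) j := by
  simp_rw [partialSum_sub_partialSum]
  exact Finset.measurable_sum _ fun _ hi => measurable_sigmaOfIncrements (Finset.mem_filter.1 hi).2

lemma measurableSet_drawdown_gt {x : ℝ} {j k : ℕ} (hk : k ≤ j) :
    MeasurableSet[sigmaOfIncrements ξ {i | i.val < j}]
      {ω | k ≤ N ∧ ∃ i ≤ k, x < partialSum (ξ · ω) i - partialSum (ξ · ω) k} := by
  by_cases hkN : k ≤ N
  · have : {ω | k ≤ N ∧ ∃ i ≤ k, x < partialSum (ξ · ω) i - partialSum (ξ · ω) k} =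
        ⋃ i ∈ Iic k, {ω | x < partialSum (ξ · ω) i - partialSum (ξ · ω) k} := by
      ext; simp [hkN]
    rw [this]
    exact MeasurableSet.biUnion (to_countable _) fun i hi => measurableSet_lt measurable_const
      ((measurable_partialSum_of_le ((mem_Iic.1 hi).trans hk)).sub (measurable_partialSum_of_le hk))
  · simp only [hkN, false_and, ofPred_false, MeasurableSet.empty]

variable [MeasurableSpace Ω] {μ : Measure Ω}

lemma sigmaOfIncrements_le (hξ : ∀ i, Measurable (ξ i)) (s : Set (Fin N)) :
    sigmaOfIncrements ξ s ≤ ‹MeasurableSpace Ω› :=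
  iSup₂_le fun i _ => (hξ i).comap_le

lemma indep_sigmaOfIncrements (hξ : ∀ i, Measurable (ξ i)) (hind : iIndepFun ξ μ) (j : ℕ) :
    Indep (sigmaOfIncrements ξ {i | i.val < j}) (sigmaOfIncrements ξ {i | j ≤ i.val}) μ :=
  indep_iSup_of_disjoint (fun i => (hξ i).comap_le) ((iIndepFun_iff_iIndep _ _ _).1 hind)
    (Set.disjoint_left.2 fun i h₁ h₂ => absurd (show i.val < j from h₁) (not_lt.2 h₂))

theorem mul_measure_drawdown_gt_le (hξ : ∀ i, Measurable (ξ i)) (hind : iIndepFun ξ μ)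
    {x y : ℝ} {p : ℝ≥0∞}
    (hp : ∀ j ≤ N, p ≤ μ {ω | partialSum (ξ · ω) N - partialSum (ξ · ω) j < y}) :
    p * μ {ω | ∃ j ≤ N, ∃ i ≤ j, x < partialSum (ξ · ω) i - partialSum (ξ · ω) j} ≤
      μ {ω | ∃ i ≤ N, x - y < partialSum (ξ · ω) i - partialSum (ξ · ω) N} := by
  set A : ℕ → Set Ω :=
    fun k => {ω | k ≤ N ∧ ∃ i ≤ k, x < partialSum (ξ · ω) i - partialSum (ξ · ω) k}
  set G : ℕ → Set Ω := fun j => {ω | partialSum (ξ · ω) N - partialSum (ξ · ω) j < y}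
  -- `disjointed A j`: the drawdown exceeds `x` for the first time at time `j`
  have hD_past (j : ℕ) : MeasurableSet[sigmaOfIncrements ξ {i | i.val < j}] (disjointed A j) := by
    rw [disjointed_eq_inter_compl]
    exact (measurableSet_drawdown_gt le_rfl).inter
      (MeasurableSet.biInter (to_countable _) fun k hk =>
        (measurableSet_drawdown_gt (le_of_lt hk)).compl)
  have hG_future (j : ℕ) : MeasurableSet[sigmaOfIncrements ξ {i | j ≤ i.val}] (G j) :=
    measurableSet_lt (measurable_partialSum_sub_of_ge j) measurable_const
  have hD (j : ℕ) : MeasurableSet (disjointed A j) :=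
    sigmaOfIncrements_le hξ _ _ (hD_past j)
  have hmul (j : ℕ) : p * μ (disjointed A j) ≤ μ (disjointed A j ∩ G j) := by
    by_cases hj : j ≤ N
    · rw [(Indep_iff _ _ μ).1 (indep_sigmaOfIncrements hξ hind j) _ _ (hD_past j) (hG_future j),
        mul_comm]
      gcongr
      exact hp j hj
    · have : disjointed A j = ∅ := subset_empty_iff.1 fun ω hω => hj (disjointed_subset A j hω).1
      simp [this]
  calc p * μ {ω | ∃ j ≤ N, ∃ i ≤ j, x < partialSum (ξ · ω) i - partialSum (ξ · ω) j}
      = p * μ (⋃ j, disjointed A j) := by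
        rw [iUnion_disjointed]
        congr 2
        ext ω
        simp [A]
    _ = ∑' j, p * μ (disjointed A j) := by
        rw [measure_iUnion (disjoint_disjointed A) hD, ENNReal.tsum_mul_left]
    _ ≤ ∑' j, μ (disjointed A j ∩ G j) := ENNReal.tsum_le_tsum hmul
    _ = μ (⋃ j, disjointed A j ∩ G j) :=
        (measure_iUnion (fun a b hab => ((disjoint_disjointed A) hab).mono inter_subset_left
          inter_subset_left) fun j => (hD j).inter (sigmaOfIncrements_le hξ _ _ (hG_future j))).symm
    _ ≤ μ {ω | ∃ i ≤ N, x - y < partialSum (ξ · ω) i - partialSum (ξ · ω) N} := by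
        refine measure_mono (iUnion_subset fun j ω ⟨hωA, hωG⟩ => ?_)
        obtain ⟨hjN, i, hij, hx⟩ := disjointed_subset A j hωA
        exact ⟨i, hij.trans hjN, by simp only [G, mem_ofPred_eq] at hωG; linarith⟩

theorem measure_exists_partialSum_sub_gt_eq (hind : iIndepFun ξ μ)
    (hlaw : ∀ i j, IdentDistrib (ξ i) (ξ j) μ μ) (z : ℝ) :
    μ {ω | ∃ i ≤ N, z < partialSum (ξ · ω) i - partialSum (ξ · ω) N} =
      μ {ω | ∃ j ≤ N, z < -partialSum (ξ · ω) j} := by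
  set A : Set (Fin N → ℝ) := {v | ∃ j ≤ N, z < -partialSum v j}
  have hA : MeasurableSet A := by
    have := measurable_partialSum (N := N)
    measurability
  have hrev := congrArg (fun ν => ν A) (hind.map_precomp_eq_map hlaw Fin.rev_injective)
  rw [Measure.map_apply_of_aemeasurable
      (aemeasurable_pi_lambda _ fun i => (hlaw _ i).aemeasurable_fst) hA,
    Measure.map_apply_of_aemeasurable
      (aemeasurable_pi_lambda _ fun i => (hlaw i i).aemeasurable_fst) hA] at hrev
  refine Eq.trans (congrArg μ ?_) hrev
  ext ω
  simp only [A, mem_preimage, mem_ofPred_eq]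
  constructor
  · rintro ⟨i, hi, hz⟩
    refine ⟨N - i, Nat.sub_le N i, ?_⟩
    rw [partialSum_rev (ξ · ω) (Nat.sub_le N i), Nat.sub_sub_self hi]
    linarith
  · rintro ⟨j, hj, hz⟩
    rw [partialSum_rev (ξ · ω) hj] at hz
    exact ⟨N - j, Nat.sub_le N j, by linarith⟩

end RandomWalk

open RandomWalk

section Levy

variable {Ω : Type*} {N : ℕ} {X : ℝ → Ω → ℝ} {α : ℝ}

noncomputable def gridIncrement (X : ℝ → Ω → ℝ) (N : ℕ) (i : Fin N) (ω : Ω) : ℝ :=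
  X ((i.val + 1 : ℕ) / N) ω - X (i.val / N) ω

def drawdownExceedsOnGrid (X : ℝ → Ω → ℝ) (x : ℝ) (N : ℕ) : Set Ω :=
  {ω | ∃ j ≤ N, ∃ i ≤ j, x < X (i / N) ω - X (j / N) ω}

lemma monotone_drawdownExceedsOnGrid_two_pow (X : ℝ → Ω → ℝ) (x : ℝ) :
    Monotone fun n : ℕ => drawdownExceedsOnGrid X x (2 ^ n) := by
  refine monotone_nat_of_le_succ fun n ω ⟨j, hj, i, hi, h⟩ => ⟨2 * j, ?_, 2 * i, by omega, ?_⟩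
  · rw [pow_succ]
    omega
  · have (k : ℕ) : ((2 * k : ℕ) : ℝ) / (2 ^ (n + 1) : ℕ) = (k : ℝ) / (2 ^ n : ℕ) := by
      push_cast
      rw [pow_succ, mul_comm _ (2 : ℝ), mul_div_mul_left _ _ two_ne_zero]
    rwa [this, this]

variable [MeasurableSpace Ω] {μ : Measure Ω}

lemma IsLevyProcess.partialSum_gridIncrement (hX : IsLevyProcess μ X) {k : ℕ} (hk : k ≤ N) (ω : Ω) :
    partialSum (gridIncrement X N · ω) k = X (k / N) ω := by
  simp only [gridIncrement]
  rw [partialSum_eq_sum_range (fun i => X ((i + 1 : ℕ) / N) ω - X (i / N) ω) hk,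
    Finset.sum_range_sub (fun i => X (i / N) ω)]
  simp [hX.zero]

lemma IsLevyProcess.measurable_gridIncrement (hX : IsLevyProcess μ X) (i : Fin N) :
    Measurable (gridIncrement X N i) :=
  (hX.meas _).sub (hX.meas _)

lemma IsLevyProcess.iIndepFun_gridIncrement (hX : IsLevyProcess μ X) :
    iIndepFun (gridIncrement X N) μ :=
  hX.indep N (fun k => k.val / N) fun _ _ hkl =>
    div_le_div_of_nonneg_right (Nat.cast_le.2 hkl) (Nat.cast_nonneg N)

lemma IsLevyProcess.identDistrib_sub (hX : IsLevyProcess μ X) {s t : ℝ} (hs : 0 ≤ s)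
    (hst : s ≤ t) : IdentDistrib (fun ω => X t ω - X s ω) (X (t - s)) μ μ where
  aemeasurable_fst := ((hX.meas t).sub (hX.meas s)).aemeasurable
  aemeasurable_snd := (hX.meas _).aemeasurable
  map_eq := by rw [← hX.stationary s (t - s) hs (sub_nonneg.2 hst), add_sub_cancel]

lemma IsLevyProcess.identDistrib_gridIncrement (hX : IsLevyProcess μ X) (i j : Fin N) :
    IdentDistrib (gridIncrement X N i) (gridIncrement X N j) μ μ := by
  have (i : Fin N) : IdentDistrib (gridIncrement X N i) (X (1 / N)) μ μ := by
    have h := hX.identDistrib_sub (s := i.val / N) (t := (i.val + 1 : ℕ) / N) (by positivity)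
      (by gcongr; simp)
    rwa [show ((i.val + 1 : ℕ) : ℝ) / N - i.val / N = 1 / N by push_cast; ring] at h
  exact (this i).trans (this j).symm

lemma SelfSimilar.identDistrib (hss : SelfSimilar μ X α) (hX : IsLevyProcess μ X) {t : ℝ}
    (ht : 0 < t) : IdentDistrib (X t) (fun ω => t ^ (1 / α) * X 1 ω) μ μ where
  aemeasurable_fst := (hX.meas t).aemeasurable
  aemeasurable_snd := ((hX.meas 1).const_mul _).aemeasurable
  map_eq := by
    have h := congrArg (Measure.map (fun f : ℝ → ℝ => f 1)) (hss t ht)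
    rw [Measure.map_map (measurable_pi_apply 1) (measurable_pi_lambda _ fun s => hX.meas _),
      Measure.map_map (measurable_pi_apply 1)
        (measurable_pi_lambda _ fun s => (hX.meas s).const_mul _)] at h
    simpa only [Function.comp_def, mul_one] using h

lemma SelfSimilar.measure_lt_le_measure_lt [IsProbabilityMeasure μ] (hss : SelfSimilar μ X α)
    (hX : IsLevyProcess μ X) (hα : 0 < α) {c t : ℝ} (hc : 0 < c) (ht₀ : 0 ≤ t) (ht₁ : t ≤ 1) :
    μ {ω | X 1 ω < c} ≤ μ {ω | X t ω < c} := by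
  rcases ht₀.eq_or_lt with rfl | ht
  · simpa [hX.zero, hc] using prob_le_one
  have hb : t ^ (1 / α) ≤ 1 := Real.rpow_le_one ht₀ ht₁ (by positivity)
  have hb₀ : 0 < t ^ (1 / α) := Real.rpow_pos_of_pos ht _
  calc μ {ω | X 1 ω < c} ≤ μ {ω | t ^ (1 / α) * X 1 ω < c} :=
        measure_mono fun ω (hω : X 1 ω < c) => show t ^ (1 / α) * X 1 ω < c by
          nlinarith [mul_lt_mul_of_pos_left hω hb₀, mul_le_mul_of_nonneg_right hb hc.le]
    _ = μ {ω | X t ω < c} := ((hss.identDistrib hX ht).measure_mem_eq measurableSet_Iio).symm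

lemma IsLevyProcess.measure_lt_le_measure_sub_lt [IsProbabilityMeasure μ] (hX : IsLevyProcess μ X)
    (hss : SelfSimilar μ X α) (hα : 0 < α) {c s t : ℝ} (hc : 0 < c) (hs : 0 ≤ s) (hst : s ≤ t)
    (ht : t ≤ 1) : μ {ω | X 1 ω < c} ≤ μ {ω | X t ω - X s ω < c} := by
  rw [show {ω | X t ω - X s ω < c} = (fun ω => X t ω - X s ω) ⁻¹' Iio c from rfl,
    (hX.identDistrib_sub hs hst).measure_mem_eq measurableSet_Iio]
  exact hss.measure_lt_le_measure_lt hX hα hc (sub_nonneg.2 hst) (by linarith)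

theorem IsLevyProcess.mul_measure_drawdownExceedsOnGrid_le [IsProbabilityMeasure μ]
    (hX : IsLevyProcess μ X) (hss : SelfSimilar μ X α) (hα : 0 < α) {ε x : ℝ} (hεx : 0 < ε * x)
    (hN : 0 < N) :
    μ {ω | X 1 ω < ε * x} * μ (drawdownExceedsOnGrid X x N) ≤
      μ {ω | ∃ j ≤ N, (1 - ε) * x < -X (j / N) ω} := by
  have hS {k : ℕ} (hk : k ≤ N) := hX.partialSum_gridIncrement hk
  have hN₁ : (N : ℝ) / N = 1 := div_self (by positivity)
  have hfirst := mul_measure_drawdown_gt_le (hX.measurable_gridIncrement (N := N))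
    hX.iIndepFun_gridIncrement (x := x) (y := ε * x) (p := μ {ω | X 1 ω < ε * x}) fun j hj => by
      simp only [hS le_rfl, hS hj, hN₁]
      exact hX.measure_lt_le_measure_sub_lt hss hα hεx (by positivity)
        (div_le_one_of_le₀ (by exact_mod_cast hj) (by positivity)) le_rfl
  have hrev := measure_exists_partialSum_sub_gt_eq (hX.iIndepFun_gridIncrement (N := N))
    hX.identDistrib_gridIncrement ((1 - ε) * x)
  rw [show x - ε * x = (1 - ε) * x by ring, hrev] at hfirst
  convert hfirst using 3
  · ext ω
    refine exists_congr fun j => and_congr_right fun hj =>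
      exists_congr fun i => and_congr_right fun hi => ?_
    rw [hS hj, hS (hi.trans hj)]
  · exact funext fun ω => propext <| exists_congr fun j => and_congr_right fun hj => by rw [hS hj]

lemma IsLevyProcess.drawdown_subset_iUnion_drawdownExceedsOnGrid (hX : IsLevyProcess μ X)
    (x : ℝ) : {ω | ∃ u v : ℝ, 0 ≤ u ∧ u ≤ v ∧ v ≤ 1 ∧ x < X u ω - X v ω} ⊆
      ⋃ n : ℕ, drawdownExceedsOnGrid X x (2 ^ n) := by
  rintro ω ⟨u, v, hu, huv, hv, hx⟩
  have hu' := Tendsto.comp (hX.rightCont ω u) (tendsto_ceil_mul_two_pow_div_two_pow hu)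
  have hv' := Tendsto.comp (hX.rightCont ω v) (tendsto_ceil_mul_two_pow_div_two_pow (hu.trans huv))
  obtain ⟨n, hn⟩ := ((hu'.sub hv').eventually (lt_mem_nhds hx)).exists
  refine mem_iUnion.2
    ⟨n, ⌈v * 2 ^ n⌉₊, Nat.ceil_le.2 ?_, ⌈u * 2 ^ n⌉₊, Nat.ceil_mono (by gcongr), ?_⟩
  · push_cast
    exact mul_le_of_le_one_left (by positivity) hv
  · push_cast
    exact hn

end Levy

/-- For an α-stable Lévy process and any `ε > 0`, `x > 0`:
`P(-I₁ > (1-ε)x) ≥ P(-X₁ > -εx) ⬝ P(M₁⁻ > x)`. -/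
theorem neg_inf_tail_ge {Ω : Type*} [MeasureSpace Ω]
    [IsProbabilityMeasure (ℙ : Measure Ω)] (X : ℝ → Ω → ℝ) (α : ℝ)
    (hα : 0 < α ∧ α ≤ 2) (hX : IsLevyProcess ℙ X) (hss : SelfSimilar ℙ X α)
    (ε x : ℝ) (hε : 0 < ε) (hx : 0 < x) :
    ℙ {ω | ∃ v : ℝ, 0 ≤ v ∧ v ≤ 1 ∧ (1 - ε) * x < -X v ω} ≥
      ℙ {ω | -(ε * x) < -X 1 ω} *
        ℙ {ω | ∃ u v : ℝ, 0 ≤ u ∧ u ≤ v ∧ v ≤ 1 ∧ x < X u ω - X v ω} := by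
  have hgrid (n : ℕ) : ℙ {ω | X 1 ω < ε * x} * ℙ (drawdownExceedsOnGrid X x (2 ^ n)) ≤
      ℙ {ω | ∃ v : ℝ, 0 ≤ v ∧ v ≤ 1 ∧ (1 - ε) * x < -X v ω} :=
    (hX.mul_measure_drawdownExceedsOnGrid_le hss hα.1 (mul_pos hε hx) (by positivity)).trans
      (measure_mono fun ω ⟨j, hj, h⟩ =>
        ⟨j / (2 ^ n : ℕ), by positivity,
          div_le_one_of_le₀ (by exact_mod_cast hj) (by positivity), h⟩)
  simp only [neg_lt_neg_iff, ge_iff_le]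
  calc ℙ {ω | X 1 ω < ε * x} * ℙ {ω | ∃ u v : ℝ, 0 ≤ u ∧ u ≤ v ∧ v ≤ 1 ∧ x < X u ω - X v ω}
      ≤ ℙ {ω | X 1 ω < ε * x} * ⨆ n : ℕ, ℙ (drawdownExceedsOnGrid X x (2 ^ n)) := by
        rw [← (monotone_drawdownExceedsOnGrid_two_pow X x).measure_iUnion]
        gcongr
        exact hX.drawdown_subset_iUnion_drawdownExceedsOnGrid x
    _ = ⨆ n : ℕ, ℙ {ω | X 1 ω < ε * x} * ℙ (drawdownExceedsOnGrid X x (2 ^ n)) :=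
        ENNReal.mul_iSup _ _
    _ ≤ ℙ {ω | ∃ v : ℝ, 0 ≤ v ∧ v ≤ 1 ∧ (1 - ε) * x < -X v ω} := iSup_le hgrid
end

section
/- Let X be an α-stable Lévy process with negative jumps and t > 0. Then there exists k > 0 such that P(M_t^- > x) · x^α → k·t as x → ∞, where M_t^- is the maximum loss up to time t. -/
open MeasureTheory ProbabilityTheory Set Filter

/-!
Taking `u = 0` gives `{I_t < -x} ⊆ {M_t⁻ > x}`, and by self-similarity
`P(I_t < -x) = P(I_1 < -x t^(-1/α)) ~ k t x^(-α)`. Conversely, on a finite time grid a loss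
larger than `x` either ends below `-c x`, or the path first climbs above `(1 - c) x` and loses
`x` afterwards. Splitting at the first such climb, independence of increments bounds the second
case by `P(sup X > (1 - c) x) · P(M_t⁻ > x)`, and càdlàg paths are bounded, so
`P(M_t⁻ > x) (1 - o(1)) ≤ P(I_t < -c x)`; letting `c ↑ 1` gives the matching upper bound.
Right-continuity of the paths lets every event be computed along the grids `t k / n`.
-/

open Topology

lemma bddAbove_image_Icc_of_cadlag {f : ℝ → ℝ}
    (hrc : ∀ s, ContinuousWithinAt f (Ici s) s)
    (hll : ∀ s, 0 < s → ∃ l, Tendsto f (𝓝[<] s) (𝓝 l)) (T : ℝ) :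
    BddAbove (f '' Icc 0 T) := by
  refine isCompact_Icc.induction_on (p := fun S => BddAbove (f '' S)) (by simp)
    (fun _ _ hst h => h.mono (image_mono hst))
    (fun _ _ hs ht => by rw [image_union]; exact hs.union ht) fun x hx => ?_
  suffices ∃ b, ∀ᶠ s in 𝓝[Icc 0 T] x, f s ≤ b by
    obtain ⟨b, hb⟩ := this
    exact ⟨_, hb, b, by rintro _ ⟨s, hs, rfl⟩; exact hs⟩
  have hright : ∀ᶠ s in 𝓝[≥] x, f s ≤ f x + 1 :=
    (hrc x).eventually (ge_mem_nhds (lt_add_one _))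
  rcases hx.1.eq_or_lt with rfl | hx0
  · exact ⟨_, nhdsWithin_mono _ (fun s hs => hs.1) hright⟩
  · obtain ⟨l, hl⟩ := hll x hx0
    have hleft : ∀ᶠ s in 𝓝[<] x, f s ≤ l + 1 := hl.eventually (ge_mem_nhds (lt_add_one _))
    refine ⟨max (l + 1) (f x + 1), eventually_nhdsWithin_of_eventually_nhds ?_⟩
    rw [← nhdsLT_sup_nhdsGE, eventually_sup]
    exact ⟨hleft.mono fun s hs => le_max_of_le_left hs,
      hright.mono fun s hs => le_max_of_le_right hs⟩

lemma mul_div_mem_Icc {T : ℝ} (hT : 0 ≤ T) {k n : ℕ} (hk : k ≤ n) :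
    T * (k / n) ∈ Icc 0 T :=
  ⟨by positivity,
    mul_le_of_le_one_right hT (div_le_one_of_le₀ (by exact_mod_cast hk) (by positivity))⟩

lemma natCeil_mul_div_le {T v : ℝ} (hT : 0 < T) (hvT : v ≤ T) (n : ℕ) : ⌈v * n / T⌉₊ ≤ n := by
  rw [Nat.ceil_le, div_le_iff₀ hT, mul_comm]
  exact mul_le_mul_of_nonneg_left hvT n.cast_nonneg

-- `T * (⌈v n / T⌉₊ / n)` is the first point of the grid `T k / n` at or after `v`.
lemma tendsto_mul_natCeil_div {T v : ℝ} (hT : 0 < T) (hv : 0 ≤ v) :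
    Tendsto (fun n : ℕ => T * (⌈v * n / T⌉₊ / n)) atTop (𝓝[≥] v) := by
  have hbounds : ∀ n : ℕ, 0 < n →
      v ≤ T * (⌈v * n / T⌉₊ / n) ∧ T * (⌈v * n / T⌉₊ / n) ≤ v + T / n := by
    intro n hn
    have hn' : (0 : ℝ) < n := by exact_mod_cast hn
    have h1 := Nat.le_ceil (v * n / T)
    have h2 := Nat.ceil_lt_add_one (show 0 ≤ v * n / T by positivity)
    rw [div_le_iff₀ hT] at h1
    rw [← sub_lt_iff_lt_add, lt_div_iff₀ hT] at h2
    constructor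
    · rw [mul_div_assoc', le_div_iff₀ hn']; linarith
    · rw [mul_div_assoc', div_le_iff₀ hn', add_mul, div_mul_cancel₀ _ hn'.ne']; linarith
  refine tendsto_nhdsWithin_iff.2 ⟨tendsto_of_tendsto_of_tendsto_of_le_of_le' tendsto_const_nhds
    (by simpa using tendsto_const_nhds.add (tendsto_const_div_atTop_nhds_zero_nat T))
    ?_ ?_, ?_⟩
  all_goals filter_upwards [eventually_gt_atTop 0] with n hn
  exacts [(hbounds n hn).1, (hbounds n hn).2, (hbounds n hn).1]

lemma exists_mul_div_lt_iff {f : ℝ → ℝ} (hf : ∀ s, ContinuousWithinAt f (Ici s) s) {T : ℝ}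
    (hT : 0 < T) (y : ℝ) :
    (∃ v, 0 ≤ v ∧ v ≤ T ∧ f v < y) ↔ ∃ n k : ℕ, k ≤ n ∧ f (T * (k / n)) < y := by
  constructor
  · rintro ⟨v, hv0, hvT, hfv⟩
    obtain ⟨n, hn⟩ := (((hf v).tendsto.comp (tendsto_mul_natCeil_div hT hv0)).eventually
      (gt_mem_nhds hfv)).exists
    exact ⟨n, _, natCeil_mul_div_le hT hvT n, hn⟩
  · rintro ⟨n, k, hk, hfk⟩
    exact ⟨_, (mul_div_mem_Icc hT.le hk).1, (mul_div_mem_Icc hT.le hk).2, hfk⟩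

lemma eventually_exists_mul_div_drawdown {f : ℝ → ℝ} (hf : ∀ s, ContinuousWithinAt f (Ici s) s)
    {T u v x : ℝ} (hT : 0 < T) (hu : 0 ≤ u) (huv : u ≤ v) (hvT : v ≤ T) (hx : x < f u - f v) :
    ∀ᶠ n : ℕ in atTop, ∃ i j : ℕ, i ≤ j ∧ j ≤ n ∧ x < f (T * (i / n)) - f (T * (j / n)) := by
  have hlim := ((hf u).tendsto.comp (tendsto_mul_natCeil_div hT hu)).sub
    ((hf v).tendsto.comp (tendsto_mul_natCeil_div hT (hu.trans huv)))
  filter_upwards [hlim.eventually (lt_mem_nhds hx)] with n hn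
  exact ⟨_, _, Nat.ceil_mono (by gcongr), natCeil_mul_div_le hT hvT n, hn⟩

lemma ProbabilityTheory.iIndepFun.indepFun_ite {Ω ι β : Type*} [MeasurableSpace Ω]
    {μ : Measure Ω} [Fintype ι] [Zero β] [MeasurableSpace β] {Y : ι → Ω → β} (hY : iIndepFun Y μ)
    (hmeas : ∀ i, Measurable (Y i)) (p : ι → Prop) [DecidablePred p] :
    IndepFun (fun ω i => if p i then Y i ω else 0) (fun ω i => if p i then 0 else Y i ω) μ := by
  have h := hY.indepFun_finset (Finset.univ.filter p) (Finset.univ.filter (¬ p ·))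
    (Finset.disjoint_filter_filter_not _ _ _) hmeas
  have hext : ∀ (q : ι → Prop) [DecidablePred q],
      Measurable fun (g : Finset.univ.filter q → β) i =>
        if h : q i then g ⟨i, by simpa⟩ else 0 := by
    intro q _
    refine measurable_pi_lambda _ fun i => ?_
    by_cases hi : q i
    · simpa [hi] using measurable_pi_apply _
    · simp [hi]
  convert h.comp (hext p) (hext (¬ p ·)) using 1 <;> funext ω i <;> by_cases hi : p i <;> simp [hi]

def partialSum {n : ℕ} (g : Fin n → ℝ) (j : ℕ) : ℝ :=
  ∑ l : Fin n, if (l : ℕ) < j then g l else 0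

lemma measurable_partialSum (n j : ℕ) : Measurable fun g : Fin n → ℝ => partialSum g j :=
  Finset.measurable_sum _ fun l _ => by split_ifs <;> fun_prop

lemma partialSum_sub_eq (h : ℕ → ℝ) {n j : ℕ} (hj : j ≤ n) :
    partialSum (fun l : Fin n => h (l + 1) - h l) j = h j - h 0 := by
  rw [partialSum, Fin.sum_univ_eq_sum_range (fun k => if k < j then h (k + 1) - h k else 0),
    ← Finset.sum_range_add_sum_Ico _ hj, ← Finset.sum_range_sub]
  rw [Finset.sum_eq_zero fun k hk => if_neg (Finset.mem_Ico.1 hk).1.not_gt, add_zero]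
  exact Finset.sum_congr rfl fun k hk => if_pos (Finset.mem_range.1 hk)

def maxLossEvent {Ω : Type*} (X : ℝ → Ω → ℝ) (t x : ℝ) : Set Ω :=
  {ω | ∃ u v : ℝ, 0 ≤ u ∧ u ≤ v ∧ v ≤ t ∧ x < X u ω - X v ω}

def infimumEvent {Ω : Type*} (X : ℝ → Ω → ℝ) (t y : ℝ) : Set Ω :=
  {ω | ∃ v : ℝ, 0 ≤ v ∧ v ≤ t ∧ X v ω < -y}

-- Taking the supremum over a countable grid keeps the event measurable.
def gridSupEvent {Ω : Type*} (X : ℝ → Ω → ℝ) (t y : ℝ) : Set Ω :=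
  {ω | ∃ n k : ℕ, k ≤ n ∧ y < X (t * (k / n)) ω}

lemma infimumEvent_subset_maxLossEvent {Ω : Type*} {X : ℝ → Ω → ℝ} (hX0 : ∀ ω, X 0 ω = 0)
    (t x : ℝ) : infimumEvent X t x ⊆ maxLossEvent X t x :=
  fun ω ⟨v, hv0, hvt, hv⟩ => ⟨0, v, le_rfl, hv0, hvt, by rw [hX0]; linarith⟩

section Levy

variable {Ω : Type*} [MeasurableSpace Ω] {P : Measure Ω} {X : ℝ → Ω → ℝ}

lemma IsLevyProcess.indepFun_stopped_shifted (hX : IsLevyProcess P X) {σ : ℕ → ℝ}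
    (hσ : Monotone σ) (hσ0 : σ 0 = 0) {i n : ℕ} (hin : i ≤ n) :
    IndepFun (fun ω (j : ℕ) => X (σ (min j i)) ω)
      (fun ω (j : ℕ) => X (σ (min (max j i) n)) ω - X (σ i) ω) P := by
  set Y : Fin n → Ω → ℝ := fun l ω => X (σ (l + 1)) ω - X (σ l) ω
  have hY : iIndepFun Y P := by
    convert hX.indep n (fun k => σ k) fun a b hab => hσ (Fin.le_iff_val_le_val.1 hab) using 1
    funext l ω
    simp [Y]
  have hsum : ∀ ω k, k ≤ n → X (σ k) ω = partialSum (fun l => Y l ω) k := fun ω k hk => by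
    rw [partialSum_sub_eq (fun k => X (σ k) ω) hk, hσ0, hX.zero, sub_zero]
  have hYmeas : ∀ l, Measurable (Y l) := fun l => (hX.meas _).sub (hX.meas _)
  convert (hY.indepFun_ite hYmeas (fun l => (l : ℕ) < i)).comp
    (measurable_pi_lambda _ fun j => measurable_partialSum n (min j i))
    (measurable_pi_lambda _ fun j => measurable_partialSum n (min (max j i) n)) using 1
    <;> funext ω j <;> simp only [Function.comp_apply]
  · rw [hsum ω _ (by omega)]
    exact Finset.sum_congr rfl fun l _ => by dsimp only; split_ifs <;> first | rfl | omega
  · rw [hsum ω _ (by omega), hsum ω i hin, partialSum, partialSum, partialSum,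
      ← Finset.sum_sub_distrib]
    exact Finset.sum_congr rfl fun l _ => by split_ifs <;> first | omega | simp

lemma IsLevyProcess.measure_passage_inter_drawdown (hX : IsLevyProcess P X) {σ : ℕ → ℝ}
    (hσ : Monotone σ) (hσ0 : σ 0 = 0) {i n : ℕ} (hin : i ≤ n) (a x : ℝ) :
    P ({ω | a < X (σ i) ω ∧ ∀ j < i, X (σ j) ω ≤ a} ∩
        {ω | ∃ p q, i ≤ p ∧ p ≤ q ∧ q ≤ n ∧ x < X (σ p) ω - X (σ q) ω})
      = P {ω | a < X (σ i) ω ∧ ∀ j < i, X (σ j) ω ≤ a}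
        * P {ω | ∃ p q, i ≤ p ∧ p ≤ q ∧ q ≤ n ∧ x < X (σ p) ω - X (σ q) ω} := by
  have hpast : {ω | a < X (σ i) ω ∧ ∀ j < i, X (σ j) ω ≤ a}
      = (fun ω j => X (σ (min j i)) ω) ⁻¹' {g | a < g i ∧ ∀ j < i, g j ≤ a} := by
    ext ω
    simp +contextual [min_eq_left_of_lt]
  have hfuture : {ω | ∃ p q, i ≤ p ∧ p ≤ q ∧ q ≤ n ∧ x < X (σ p) ω - X (σ q) ω}
      = (fun ω j => X (σ (min (max j i) n)) ω - X (σ i) ω) ⁻¹'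
        {g | ∃ p q, i ≤ p ∧ p ≤ q ∧ q ≤ n ∧ x < g p - g q} := by
    ext ω
    refine exists₂_congr fun p q => and_congr_right fun hip => and_congr_right fun hpq =>
      and_congr_right fun hqn => ?_
    beta_reduce
    rw [show min (max p i) n = p by omega, show min (max q i) n = q by omega,
      sub_sub_sub_cancel_right]
  rw [hpast, hfuture]
  refine (hX.indepFun_stopped_shifted hσ hσ0 hin).measure_inter_preimage_eq_mul _ _ ?_ ?_
  · measurability
  · measurability

-- Split at the first grid index `i` with `a < X (σ i)`: the event up to `i` is independent of
-- the increments after `i`, and those must still produce the loss.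
lemma IsLevyProcess.measure_passage_drawdown_le (hX : IsLevyProcess P X) {σ : ℕ → ℝ}
    (hσ : Monotone σ) (hσ0 : σ 0 = 0) (n : ℕ) (a x : ℝ) :
    P {ω | ∃ i j, i ≤ j ∧ j ≤ n ∧ a < X (σ i) ω ∧ x < X (σ i) ω - X (σ j) ω}
      ≤ P {ω | ∃ i ≤ n, a < X (σ i) ω}
        * P {ω | ∃ i j, i ≤ j ∧ j ≤ n ∧ x < X (σ i) ω - X (σ j) ω} := by
  set B : ℕ → Set Ω := fun i => {ω | a < X (σ i) ω ∧ ∀ j < i, X (σ j) ω ≤ a}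
  set C : ℕ → Set Ω :=
    fun i => {ω | ∃ p q, i ≤ p ∧ p ≤ q ∧ q ≤ n ∧ x < X (σ p) ω - X (σ q) ω}
  have hB : ∀ i, MeasurableSet (B i) := fun i => by
    simp only [B, ofPred_and, ofPred_forall]
    exact (measurableSet_lt measurable_const (hX.meas _)).inter
      (.iInter fun j => .iInter fun _ => measurableSet_le (hX.meas _) measurable_const)
  have hcover : {ω | ∃ i j, i ≤ j ∧ j ≤ n ∧ a < X (σ i) ω ∧ x < X (σ i) ω - X (σ j) ω}
      ⊆ ⋃ i ∈ Finset.range (n + 1), B i ∩ C i := by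
    rintro ω ⟨i, j, hij, hjn, hai, hx⟩
    have hex : ∃ k, a < X (σ k) ω := ⟨i, hai⟩
    have hfind := Nat.find_min' hex hai
    exact mem_iUnion₂.2 ⟨Nat.find hex, Finset.mem_range.2 (by omega),
      ⟨Nat.find_spec hex, fun j hj => not_lt.1 (Nat.find_min hex hj)⟩, i, j, hfind, hij, hjn, hx⟩
  have hdisj : PairwiseDisjoint (↑(Finset.range (n + 1))) B := by
    refine ((pairwise_disjoint_on B).2 fun i j hij => ?_).set_pairwise _
    exact disjoint_left.2 fun ω hi hj => (hj.2 i hij).not_gt hi.1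
  calc _ ≤ ∑ i ∈ Finset.range (n + 1), P (B i ∩ C i) :=
        (measure_mono hcover).trans (measure_biUnion_finset_le _ _)
    _ = ∑ i ∈ Finset.range (n + 1), P (B i) * P (C i) :=
        Finset.sum_congr rfl fun i hi => hX.measure_passage_inter_drawdown hσ hσ0
          (Nat.lt_succ_iff.1 (Finset.mem_range.1 hi)) a x
    _ ≤ ∑ i ∈ Finset.range (n + 1), P (B i) *
          P {ω | ∃ i j, i ≤ j ∧ j ≤ n ∧ x < X (σ i) ω - X (σ j) ω} := by
        gcongr with i
        exact fun ω ⟨p, q, _, hpq, hqn, h⟩ => ⟨p, q, hpq, hqn, h⟩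
    _ = P (⋃ i ∈ Finset.range (n + 1), B i) *
          P {ω | ∃ i j, i ≤ j ∧ j ≤ n ∧ x < X (σ i) ω - X (σ j) ω} := by
        rw [measure_biUnion_finset hdisj fun i _ => hB i, Finset.sum_mul]
    _ ≤ _ := by
        gcongr
        simp only [iUnion_subset_iff, Finset.mem_range]
        exact fun i hi ω hω => ⟨i, Nat.lt_succ_iff.1 hi, hω.1⟩

-- On a grid, a loss of `x` ending above `-c x` must start above `(1 - c) x`.
lemma IsLevyProcess.measure_maxLossEvent_le (hX : IsLevyProcess P X) {t : ℝ} (ht : 0 < t)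
    (x c : ℝ) :
    P (maxLossEvent X t x) ≤ P (infimumEvent X t (c * x))
      + P (gridSupEvent X t ((1 - c) * x)) * P (maxLossEvent X t x) := by
  set A : ℕ → Set Ω := fun n =>
    {ω | ∃ i j : ℕ, i ≤ j ∧ j ≤ n ∧ x < X (t * (i / n)) ω - X (t * (j / n)) ω}
  have hA : ∀ n, P (A n) ≤ P (infimumEvent X t (c * x))
      + P (gridSupEvent X t ((1 - c) * x)) * P (maxLossEvent X t x) := by
    intro n
    have hσ : Monotone fun k : ℕ => t * (k / n) := fun a b h =>
      mul_le_mul_of_nonneg_left (div_le_div_of_nonneg_right (Nat.cast_le.2 h) n.cast_nonneg) ht.le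
    have hsplit : A n ⊆ infimumEvent X t (c * x) ∪ {ω | ∃ i j : ℕ, i ≤ j ∧ j ≤ n ∧
        (1 - c) * x < X (t * (i / n)) ω ∧ x < X (t * (i / n)) ω - X (t * (j / n)) ω} := by
      rintro ω ⟨i, j, hij, hjn, hx⟩
      by_cases hj : X (t * (j / n)) ω < -(c * x)
      · exact Or.inl ⟨_, (mul_div_mem_Icc ht.le hjn).1, (mul_div_mem_Icc ht.le hjn).2, hj⟩
      · exact Or.inr ⟨i, j, hij, hjn, by linarith, hx⟩
    refine (measure_mono hsplit).trans ((measure_union_le _ _).trans (add_le_add le_rfl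
      ((hX.measure_passage_drawdown_le hσ (by simp) n _ x).trans
        (mul_le_mul' (measure_mono ?_) (measure_mono ?_)))))
    · exact fun ω ⟨i, hi, h⟩ => ⟨n, i, hi, h⟩
    · exact fun ω ⟨i, j, hij, hjn, h⟩ => ⟨_, _, (mul_div_mem_Icc ht.le (hij.trans hjn)).1,
        hσ hij, (mul_div_mem_Icc ht.le hjn).2, h⟩
  have hcover : maxLossEvent X t x ⊆ ⋃ N, ⋂ n ≥ N, A n := by
    rintro ω ⟨u, v, hu, huv, hvt, hx⟩
    obtain ⟨N, hN⟩ := eventually_atTop.1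
      (eventually_exists_mul_div_drawdown (hX.rightCont ω) ht hu huv hvt hx)
    exact mem_iUnion.2 ⟨N, mem_iInter₂.2 hN⟩
  have hmono : Monotone fun N => ⋂ n ≥ N, A n :=
    fun N M h => biInter_mono (fun n hn => h.trans hn) fun _ _ => subset_rfl
  calc _ ≤ P (⋃ N, ⋂ n ≥ N, A n) := measure_mono hcover
    _ = ⨆ N, P (⋂ n ≥ N, A n) := hmono.measure_iUnion
    _ ≤ _ := iSup_le fun N => (measure_mono (iInter₂_subset N le_rfl)).trans (hA N)

lemma IsLevyProcess.tendsto_measure_gridSupEvent [IsFiniteMeasure P] (hX : IsLevyProcess P X)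
    {t : ℝ} (ht : 0 ≤ t) : Tendsto (fun y => P (gridSupEvent X t y)) atTop (𝓝 0) := by
  have hempty : ⋂ y : ℝ, gridSupEvent X t y = ∅ := by
    ext ω
    simp only [mem_iInter, mem_empty_iff_false, iff_false, not_forall]
    obtain ⟨C, hC⟩ := bddAbove_image_Icc_of_cadlag (hX.rightCont ω) (hX.leftLimits ω) t
    exact ⟨C, fun ⟨n, k, hk, h⟩ => h.not_ge (hC ⟨_, mul_div_mem_Icc ht hk, rfl⟩)⟩
  have hmeas : ∀ y, MeasurableSet (gridSupEvent X t y) := fun y => by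
    simp only [gridSupEvent, ofPred_exists, ofPred_and]
    exact .iUnion fun n => .iUnion fun k => .inter (by simp)
      (measurableSet_lt measurable_const (hX.meas _))
  simpa [hempty, Function.comp_def] using
    tendsto_measure_iInter_atTop (fun y => (hmeas y).nullMeasurableSet)
    (fun y y' h ω ⟨n, k, hk, hy⟩ => ⟨n, k, hk, h.trans_lt hy⟩) ⟨0, measure_ne_top _ _⟩

lemma IsLevyProcess.measure_infimumEvent_eq (hX : IsLevyProcess P X) {α t : ℝ}
    (hss : SelfSimilar P X α) (ht : 0 < t) (y : ℝ) :
    P (infimumEvent X t y) = P (infimumEvent X 1 (y / t ^ (1 / α))) := by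
  have hc : 0 < t ^ (1 / α) := Real.rpow_pos_of_pos ht _
  set E : Set (ℝ → ℝ) := {f | ∃ n k : ℕ, k ≤ n ∧ f (k / n) < -y}
  have hE : MeasurableSet E := by
    simp only [E, ofPred_exists, ofPred_and]
    exact .iUnion fun n => .iUnion fun k => .inter (by simp)
      (measurableSet_lt (measurable_pi_apply _) measurable_const)
  have hΦ : Measurable fun ω (s : ℝ) => X (t * s) ω := measurable_pi_lambda _ fun s => hX.meas _
  have hΨ : Measurable fun ω (s : ℝ) => t ^ (1 / α) * X s ω :=
    measurable_pi_lambda _ fun s => (hX.meas s).const_mul _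
  have hΦE : (fun ω (s : ℝ) => X (t * s) ω) ⁻¹' E = infimumEvent X t y := by
    ext ω
    exact (exists_mul_div_lt_iff (hX.rightCont ω) ht _).symm
  have hΨE : (fun ω (s : ℝ) => t ^ (1 / α) * X s ω) ⁻¹' E
      = infimumEvent X 1 (y / t ^ (1 / α)) := by
    ext ω
    refine (exists₂_congr fun n k => and_congr_right fun _ => ?_).trans
      (exists_mul_div_lt_iff (hX.rightCont ω) one_pos _).symm
    beta_reduce
    rw [one_mul, ← neg_div, lt_div_iff₀' hc]
  rw [← hΦE, ← hΨE, ← Measure.map_apply hΦ hE, ← Measure.map_apply hΨ hE, hss t ht]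

lemma IsLevyProcess.tendsto_measure_infimumEvent_mul_rpow (hX : IsLevyProcess P X) {α t k : ℝ}
    (hα : 0 < α) (hss : SelfSimilar P X α) (ht : 0 < t)
    (hk : Tendsto (fun x => (P (infimumEvent X 1 x)).toReal * x ^ α) atTop (𝓝 k)) :
    Tendsto (fun x => (P (infimumEvent X t x)).toReal * x ^ α) atTop (𝓝 (k * t)) := by
  have hc : 0 < t ^ (1 / α) := Real.rpow_pos_of_pos ht _
  refine ((hk.comp (tendsto_id.atTop_div_const hc)).mul_const t).congr' ?_
  filter_upwards [eventually_gt_atTop 0] with x hx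
  have hscale : (x / t ^ (1 / α)) ^ α = x ^ α / t := by
    rw [Real.div_rpow hx.le hc.le, ← Real.rpow_mul ht.le, one_div_mul_cancel hα.ne', Real.rpow_one]
  simp only [Function.comp_apply, id, hscale, hX.measure_infimumEvent_eq hss ht x]
  field_simp

end Levy

lemma tendsto_mul_rpow_of_le_of_le_comp_mul {p q : ℝ → ℝ} {L α : ℝ}
    (hq : Tendsto (fun x => q x * x ^ α) atTop (𝓝 L)) (hqp : ∀ᶠ x in atTop, q x ≤ p x)
    (hpq : ∀ c ∈ Ioo (0 : ℝ) 1, ∃ r : ℝ → ℝ, Tendsto r atTop (𝓝 0) ∧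
      ∀ᶠ x in atTop, p x ≤ q (c * x) + r x * p x) :
    Tendsto (fun x => p x * x ^ α) atTop (𝓝 L) := by
  refine tendsto_order.2 ⟨fun a ha => ?_, fun a ha => ?_⟩
  · filter_upwards [hq.eventually (lt_mem_nhds ha), hqp, eventually_gt_atTop 0] with x h1 h2 h3
    exact h1.trans_le (mul_le_mul_of_nonneg_right h2 (Real.rpow_nonneg h3.le _))
  have hcont : Tendsto (fun c : ℝ => L / c ^ α) (𝓝[<] 1) (𝓝 L) := by
    have : ContinuousAt (fun c : ℝ => L / c ^ α) 1 :=
      continuousAt_const.div (Real.continuousAt_rpow_const 1 α (Or.inl one_ne_zero)) (by simp)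
    simpa using this.tendsto.mono_left nhdsWithin_le_nhds
  obtain ⟨c, hcL, hc⟩ := ((hcont.eventually (gt_mem_nhds ha)).and
    (Ioo_mem_nhdsLT zero_lt_one)).exists
  obtain ⟨r, hr, hpr⟩ := hpq c hc
  have hqc : Tendsto (fun x => q (c * x) * x ^ α / (1 - r x)) atTop (𝓝 (L / c ^ α)) := by
    have h := (hq.comp (tendsto_id.const_mul_atTop hc.1)).div_const (c ^ α)
    refine (h.congr' ?_).div (tendsto_const_nhds.sub hr) (by simp) |>.trans (by simp)
    filter_upwards [eventually_gt_atTop 0] with x hx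
    simp only [Function.comp_apply, id, Real.mul_rpow hc.1.le hx.le]
    field_simp [(Real.rpow_pos_of_pos hc.1 α).ne']
  filter_upwards [hqc.eventually (gt_mem_nhds hcL), hpr, hr.eventually (gt_mem_nhds one_pos),
    eventually_gt_atTop 0] with x h1 h2 h3 h4
  refine lt_of_le_of_lt ?_ h1
  rw [le_div_iff₀ (by linarith)]
  calc p x * x ^ α * (1 - r x) = (p x * (1 - r x)) * x ^ α := by ring
    _ ≤ q (c * x) * x ^ α := by gcongr; linarith [Real.rpow_nonneg h4.le α]

theorem maxLoss_tail_stable_general {Ω : Type*} [MeasureSpace Ω]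
    [IsProbabilityMeasure (ℙ : Measure Ω)] (X : ℝ → Ω → ℝ) (α : ℝ)
    (hα : 0 < α ∧ α < 2) (hX : IsLevyProcess ℙ X) (hss : SelfSimilar ℙ X α)
    (hBertoin : ∃ k : ℝ, 0 < k ∧ Filter.Tendsto
      (fun x : ℝ => (ℙ {ω | ∃ v : ℝ, 0 ≤ v ∧ v ≤ 1 ∧ X v ω < -x}).toReal * x ^ α)
      Filter.atTop (nhds k))
    (t : ℝ) (ht : 0 < t) :
    ∃ k : ℝ, 0 < k ∧ Filter.Tendsto
      (fun x : ℝ => (ℙ {ω | ∃ u v : ℝ, 0 ≤ u ∧ u ≤ v ∧ v ≤ t ∧ x < X u ω - X v ω}).toReal * x ^ α)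
      Filter.atTop (nhds (k * t)) := by
  obtain ⟨k, hk, hinf⟩ := hBertoin
  refine ⟨k, hk, tendsto_mul_rpow_of_le_of_le_comp_mul
    (hX.tendsto_measure_infimumEvent_mul_rpow hα.1 hss ht hinf) (.of_forall fun x => ?_)
    fun c hc => ⟨fun x => (ℙ (gridSupEvent X t ((1 - c) * x))).toReal, ?_,
      .of_forall fun x => ?_⟩⟩
  · exact ENNReal.toReal_mono (measure_ne_top _ _)
      (measure_mono (infimumEvent_subset_maxLossEvent hX.zero t x))
  · exact (ENNReal.tendsto_toReal ENNReal.zero_ne_top).comp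
      ((hX.tendsto_measure_gridSupEvent ht.le).comp
        (tendsto_id.const_mul_atTop (sub_pos.2 hc.2)))
  · have h := hX.measure_maxLossEvent_le ht x c
    rw [← ENNReal.toReal_le_toReal (by finiteness) (by finiteness), ENNReal.toReal_add
      (by finiteness) (by finiteness), ENNReal.toReal_mul] at h
    exact h

/-- (Theorem 1) Let `X` be an α-stable Lévy process with negative jumps and `t > 0`.
Then there exists `k > 0` such that `P(M_t⁻ > x) ⬝ x^α → k t` as `x → ∞`. -/
theorem maxLoss_tail_stable {Ω : Type*} [MeasureSpace Ω]
    [IsProbabilityMeasure (ℙ : Measure Ω)] (X : ℝ → Ω → ℝ) (α : ℝ)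
    (hα : 0 < α ∧ α < 2) (hX : IsLevyProcess ℙ X) (hss : SelfSimilar ℙ X α)
    (hnegjumps : ℙ {ω | ∃ s : ℝ, 0 < s ∧ X s ω < Function.leftLim (fun r => X r ω) s} ≠ 0)
    (hBertoin : ∃ k : ℝ, 0 < k ∧ Filter.Tendsto
      (fun x : ℝ => (ℙ {ω | ∃ v : ℝ, 0 ≤ v ∧ v ≤ 1 ∧ X v ω < -x}).toReal * x ^ α)
      Filter.atTop (nhds k))
    (t : ℝ) (ht : 0 < t) :
    ∃ k : ℝ, 0 < k ∧ Filter.Tendsto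
      (fun x : ℝ => (ℙ {ω | ∃ u v : ℝ, 0 ≤ u ∧ u ≤ v ∧ v ≤ t ∧ x < X u ω - X v ω}).toReal * x ^ α)
      Filter.atTop (nhds (k * t)) :=
  maxLoss_tail_stable_general X α hα hX hss hBertoin t ht
end

section
/- For a spectrally negative Lévy process with scale function W, the excursion measure of the reflected process S − X satisfies n(ε̄ > t) = W'_+(t)/W(t) for t > 0, where ε̄ is the height of a generic excursion and W'_+ is the right derivative of W. -/
open Set

/-- For a spectrally negative Lévy process with scale function `W`, the excursion
measure of the reflected process satisfies `n(ε̄ > t) = W'_+(t) / W(t)`. Here the tail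
`t ↦ n(ε̄ > t)` of the excursion-height measure is abstracted as a right-continuous
locally integrable function `nbar` satisfying the defining relation
`W(x)/W(y) = exp(-∫_x^y nbar(s) ds)` for `y > x > 0`. -/
theorem excursion_height_tail_eq (W nbar : ℝ → ℝ)
    (hWpos : ∀ x : ℝ, 0 < x → 0 < W x)
    (hrel : ∀ x y : ℝ, 0 < x → x < y → W x / W y = Real.exp (-∫ s in x..y, nbar s))
    (hncont : ∀ t : ℝ, 0 < t → ContinuousWithinAt nbar (Ici t) t)
    (hnint : ∀ x y : ℝ, 0 < x → x < y → IntervalIntegrable nbar MeasureTheory.volume x y)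
    (t : ℝ) (ht : 0 < t) :
    nbar t = derivWithin W (Ici t) t / W t := by
  have hWt : 0 < W t := hWpos t ht
  set g : ℝ → ℝ := fun y => W t * Real.exp (∫ s in t..y, nbar s) with hg
  -- W agrees with g on Ici t
  have hWg : ∀ y ∈ Ici t, W y = g y := by
    intro y hy
    rcases eq_or_lt_of_le (mem_Ici.mp hy) with h | h
    · simp [hg, ← h]
    · have hWy : 0 < W y := hWpos y (ht.trans h)
      have := hrel t y ht h
      have h2 : W y = W t / Real.exp (-∫ s in t..y, nbar s) := by
        field_simp at this ⊢
        linarith [this]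
      rw [h2, Real.exp_neg, hg]
      field_simp
  -- measurability of nbar near t within Ici t
  have hmeas : StronglyMeasurableAtFilter nbar (nhdsWithin t (Ioi t))
      MeasureTheory.volume := by
    refine ⟨Icc t (t + 1), ?_, ?_⟩
    · exact nhdsWithin_mono t Ioi_subset_Ici_self
        (Icc_mem_nhdsGE_of_mem ⟨le_refl t, by linarith⟩)
    · have h1 : MeasureTheory.IntegrableOn nbar (Ioc t (t + 1)) MeasureTheory.volume :=
        ((hnint t (t + 1) ht (by linarith)).1)
      have h2 : MeasureTheory.volume.restrict (Icc t (t + 1)) =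
          MeasureTheory.volume.restrict (Ioc t (t + 1)) :=
        MeasureTheory.Measure.restrict_congr_set MeasureTheory.Ioc_ae_eq_Icc.symm
      rw [h2]
      exact h1.aestronglyMeasurable
  -- FTC: derivative of the integral
  have hF : HasDerivWithinAt (fun y => ∫ s in t..y, nbar s) (nbar t) (Ici t) t :=
    intervalIntegral.integral_hasDerivWithinAt_right (by simp) hmeas ((hncont t ht).mono Ioi_subset_Ici_self)
  have hgderiv : HasDerivWithinAt g (W t * nbar t) (Ici t) t := by
    have hexp : HasDerivWithinAt (fun y => Real.exp (∫ s in t..y, nbar s))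
        (Real.exp (∫ s in t..t, nbar s) * nbar t) (Ici t) t := hF.exp
    simp only [intervalIntegral.integral_same, Real.exp_zero, one_mul] at hexp
    simpa [hg, mul_comm] using hexp.const_mul (W t)
  have hWderiv : HasDerivWithinAt W (W t * nbar t) (Ici t) t :=
    hgderiv.congr (fun y hy => (hWg y hy)) (hWg t (mem_Ici.mpr le_rfl))
  have hud : UniqueDiffWithinAt ℝ (Ici t) t := uniqueDiffOn_Ici t t (mem_Ici.mpr le_rfl)
  rw [hWderiv.derivWithin hud]
  field_simp
end
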